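/- For all nonnegative integers n and \ell and real number \alpha, the noncentral Bell numbers satisfy B_\alpha(n+\ell) = \sum_{j=0}^{\ell} \sum_{k=0}^{n} S_\alpha(\ell, j) \binom{n}{k} j^{n-k} B_\alpha(k), where S_\alpha(n,k) are the noncentral Stirling numbers of the second kind and B_\alpha(n) = \sum_{k=0}^n S_\alpha(n,k). -/

import Mathlib

/-!
Write `P_n(x) = ∑ₖ C(n,k) x^(n-k) B_α(k)` (the Appell polynomial of `B_α`), so that the right-hand
side is `∑ⱼ S_α(ℓ,j) P_n(j)`. Induct on `n`. The recurrence for `S_α(ℓ+1, ·)` turns the identity for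
`(n, ℓ+1)` into `B_α(n+1+ℓ) = ∑ⱼ S_α(ℓ,j) (P_n(j+1) + (j-α) P_n(j))`, and
`P_{n+1}(x) = P_n(x+1) + (x-α) P_n(x)` follows from `P_n(x+1) = ∑ₖ C(n,k) x^(n-k) P_k(1)` and the
Bell recurrence `B_α(k+1) = P_k(1) - α B_α(k)` for `k ≤ n`, which is the case `ℓ = 1` of the
identity for smaller `n`.
-/

/-- The noncentral Stirling numbers of the second kind, with recurrence factor `k - α`. -/
noncomputable def ncStirling (α : ℝ) : ℕ → ℕ → ℝ
  | 0, 0 => 1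
  | 0, _ + 1 => 0
  | n + 1, 0 => (0 - α) * ncStirling α n 0
  | n + 1, k + 1 => ncStirling α n k + ((k + 1 : ℝ) - α) * ncStirling α n (k + 1)

/-- The noncentral Bell numbers: the sum over k ≤ n of `S_α(n,k)`. -/
noncomputable def ncBell (α : ℝ) (n : ℕ) : ℝ :=
  ∑ k ∈ Finset.range (n + 1), ncStirling α n k

open Finset

theorem ncStirling_eq_zero_of_lt (α : ℝ) : ∀ {n k : ℕ}, n < k → ncStirling α n k = 0
  | 0, _ + 1, _ => by simp [ncStirling]
  | n + 1, k + 1, h => by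
    rw [ncStirling, ncStirling_eq_zero_of_lt α (by omega : n < k),
      ncStirling_eq_zero_of_lt α (by omega : n < k + 1), mul_zero, add_zero]

theorem sum_ncStirling_succ_mul (α : ℝ) (ℓ : ℕ) (f : ℕ → ℝ) :
    ∑ j ∈ range (ℓ + 2), ncStirling α (ℓ + 1) j * f j =
      ∑ j ∈ range (ℓ + 1), ncStirling α ℓ j * (f (j + 1) + (j - α) * f j) := by
  have hweighted : ∑ j ∈ range (ℓ + 1), ncStirling α ℓ j * ((j - α) * f j) =
      ∑ j ∈ range (ℓ + 1), ((j + 1 : ℕ) - α) * ncStirling α ℓ (j + 1) * f (j + 1) +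
        (0 - α) * ncStirling α ℓ 0 * f 0 := by
    calc _ = ∑ j ∈ range (ℓ + 2), ncStirling α ℓ j * ((j - α) * f j) := by
          rw [sum_range_succ _ (ℓ + 1), ncStirling_eq_zero_of_lt α (Nat.lt_succ_self ℓ),
            zero_mul, add_zero]
      _ = _ := by
          rw [sum_range_succ']
          simp only [Nat.cast_zero, mul_left_comm, mul_assoc]
  rw [sum_range_succ']
  simp only [ncStirling, add_mul, sum_add_distrib, mul_add, hweighted]
  push_cast
  ring

section Appell

variable {R : Type*} [CommSemiring R]

/-- `(x + b)ⁿ` expanded binomially, with `bᵏ` read umbrally as `b k`. -/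
def appell (b : ℕ → R) (n : ℕ) (x : R) : R :=
  ∑ k ∈ range (n + 1), (n.choose k : R) * x ^ (n - k) * b k

theorem appell_zero (b : ℕ → R) (x : R) : appell b 0 x = b 0 := by
  simp [appell]

theorem appell_zero_right (b : ℕ → R) (n : ℕ) : appell b n 0 = b n := by
  rw [appell, sum_range_succ, sum_eq_zero fun k hk => by
    rw [zero_pow (by simp at hk; omega), mul_zero, zero_mul]]
  simp

theorem appell_add (b c : ℕ → R) (n : ℕ) (x : R) :
    appell (fun k => b k + c k) n x = appell b n x + appell c n x := by
  simp only [appell, mul_add, sum_add_distrib]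

theorem appell_const_mul (a : R) (b : ℕ → R) (n : ℕ) (x : R) :
    appell (fun k => a * b k) n x = a * appell b n x := by
  simp only [appell, mul_sum]
  exact sum_congr rfl fun _ _ => by ring

theorem appell_congr {b c : ℕ → R} {n : ℕ} (h : ∀ k ≤ n, b k = c k) (x : R) :
    appell b n x = appell c n x :=
  sum_congr rfl fun k hk => by rw [h k (by simp at hk; omega)]

theorem appell_succ (b : ℕ → R) (n : ℕ) (x : R) :
    appell b (n + 1) x = x * appell b n x + appell (fun k => b (k + 1)) n x := by
  simp only [appell, mul_assoc]
  rw [sum_choose_succ_mul (fun k j => x ^ j * b k), mul_sum]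
  simp only [← mul_assoc]
  congr 1
  refine sum_congr rfl fun k hk => ?_
  rw [show n + 1 - k = n - k + 1 by simp at hk; omega, pow_succ]
  ring

theorem appell_appell (b : ℕ → R) (n : ℕ) (x y : R) :
    appell (fun k => appell b k y) n x = appell b n (x + y) := by
  induction n generalizing b with
  | zero => simp [appell_zero]
  | succ n ih =>
    simp only [appell_succ, appell_add, appell_const_mul, ih]
    ring

end Appell

theorem ncBell_zero (α : ℝ) : ncBell α 0 = 1 := by
  simp [ncBell, ncStirling]

theorem appell_ncBell_succ (α : ℝ) {n : ℕ}
    (hrec : ∀ k ≤ n, ncBell α (k + 1) = appell (ncBell α) k 1 - α * ncBell α k) (x : ℝ) :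
    appell (ncBell α) (n + 1) x = appell (ncBell α) n (x + 1) + (x - α) * appell (ncBell α) n x := by
  have hrec' : ∀ k ≤ n, ncBell α (k + 1) = appell (ncBell α) k 1 + (-α) * ncBell α k :=
    fun k hk => by rw [hrec k hk, neg_mul, sub_eq_add_neg]
  rw [appell_succ, appell_congr hrec', appell_add, appell_const_mul, appell_appell]
  ring

theorem ncBell_add_eq_sum_ncStirling_mul_appell (α : ℝ) (n ℓ : ℕ) :
    ncBell α (n + ℓ) = ∑ j ∈ range (ℓ + 1), ncStirling α ℓ j * appell (ncBell α) n j := by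
  induction n using Nat.strong_induction_on generalizing ℓ with
  | _ n ih =>
  obtain _ | m := n
  · simp only [zero_add, appell_zero, ncBell_zero, mul_one]
    rfl
  have hrec : ∀ k ≤ m, ncBell α (k + 1) = appell (ncBell α) k 1 - α * ncBell α k := fun k hk => by
    have := ih k (by omega) 1
    simp only [sum_range_succ, range_one, sum_singleton, ncStirling, Nat.cast_zero, Nat.cast_one,
      appell_zero_right] at this
    rw [this]
    ring
  rw [show m + 1 + ℓ = m + (ℓ + 1) by omega, ih m (by omega), sum_ncStirling_succ_mul]
  exact sum_congr rfl fun j _ => by rw [appell_ncBell_succ α hrec]; push_cast; ring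

theorem ncBell_spivey (n ℓ : ℕ) (α : ℝ) :
    ncBell α (n + ℓ) =
      ∑ j ∈ Finset.range (ℓ + 1), ∑ k ∈ Finset.range (n + 1),
        ncStirling α ℓ j * (n.choose k : ℝ) * (j : ℝ) ^ (n - k) * ncBell α k := by
  rw [ncBell_add_eq_sum_ncStirling_mul_appell]
  simp only [appell, mul_sum, mul_assoc]
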